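/- Let p be a probability distribution on a finite alphabet X and r ≥ 0. Then sup_{0 ≤ α ≤ 1} (1−α)·(r − H_α(p)) = inf_{q ∈ Q(X)} [ D(q‖p) + max{0, r − H(q) − D(q‖p)} ], where H_α(p) = (1/(1−α)) log₂ ∑_x p(x)^α is the Rényi entropy, H(q) is the Shannon entropy and D is relative entropy (all base 2), and the supremum is interpreted via the continuous extension at α = 1. -/

import Mathlib

/-- `p` is a probability distribution on the finite set `X`. -/
def IsProb {X : Type*} [Fintype X] (p : X → ℝ) : Prop :=
  (∀ x, 0 ≤ p x) ∧ ∑ x, p x = 1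

/-- Base-2 Shannon entropy. -/
noncomputable def shannonEntropy {X : Type*} [Fintype X] (t : X → ℝ) : ℝ :=
  -∑ x, t x * Real.logb 2 (t x)

/-- Base-2 relative entropy (Kullback–Leibler divergence). -/
noncomputable def Dkl {X : Type*} [Fintype X] (t p : X → ℝ) : ℝ :=
  ∑ x, t x * Real.logb 2 (t x / p x)

/-- Rényi entropy `H_α(p) = (1/(1-α)) log₂ ∑_{x ∈ supp p} p(x)^α` for `α ∈ [0,1)`,
continuously extended by the Shannon entropy at `α = 1`. -/
noncomputable def renyiEntropy {X : Type*} [Fintype X] (α : ℝ) (p : X → ℝ) : ℝ :=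
  if α = 1 then shannonEntropy p
  else (1 / (1 - α)) * Real.logb 2 (∑ x, if p x = 0 then 0 else p x ^ α)

/-!
For `q ≪ p`, Gibbs' inequality `D(q ‖ p_α) ≥ 0` against the escort distribution `p_α ∝ p ^ α`
reads `(1 - α)(r - H_α(p)) ≤ α D(q ‖ p) + (1 - α)(r - H(q))`, a convex combination of two numbers
bounded by `max (D(q ‖ p)) (r - H(q))`; this is weak duality. For `q = p_β` the gap between the
two sides is `(1 - β)(Φ β - r) + max 0 (r - Φ β)`, where `Φ β = H(p_β) + D(p_β ‖ p)` is a cross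
entropy, continuous in `β`. The gap vanishes at `β = 1` if `r ≤ Φ 1`, at `β = 0` if `Φ 0 ≤ r`, and
otherwise at a solution of `Φ β = r` given by the intermediate value theorem.
-/

open Real Finset Set

section Divergence

variable {X : Type*} [Fintype X]

noncomputable def crossEntropy (q p : X → ℝ) : ℝ :=
  -∑ x, q x * logb 2 (p x)

theorem Dkl_eq_crossEntropy_sub_shannonEntropy {q p : X → ℝ}
    (hqp : ∀ x, p x = 0 → q x = 0) :
    Dkl q p = crossEntropy q p - shannonEntropy q := by
  rw [Dkl, crossEntropy, shannonEntropy, sub_neg_eq_add, neg_add_eq_sub, ← sum_sub_distrib]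
  refine sum_congr rfl fun x _ => ?_
  by_cases hq : q x = 0
  · simp [hq]
  · rw [logb_div hq fun hp => hq (hqp x hp)]
    ring

theorem Dkl_self (q : X → ℝ) : Dkl q q = 0 :=
  sum_eq_zero fun x _ => by by_cases hx : q x = 0 <;> simp [hx]

theorem sub_div_log_two_le_mul_logb_div {a b : ℝ} (ha : 0 ≤ a) (hb : 0 ≤ b)
    (hab : a ≠ 0 → b ≠ 0) : (a - b) / log 2 ≤ a * logb 2 (a / b) := by
  rcases ha.eq_or_lt with rfl | ha
  · simp only [zero_sub, zero_div, zero_mul, neg_div]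
    exact neg_nonpos.mpr (div_nonneg hb (log_nonneg one_le_two))
  have hb : 0 < b := hb.lt_of_ne' (hab ha.ne')
  have h := one_sub_inv_le_log_of_pos (div_pos ha hb)
  rw [inv_div] at h
  rw [logb, mul_div_assoc', div_le_div_iff_of_pos_right (log_pos one_lt_two)]
  calc a - b = a * (1 - b / a) := by field_simp
    _ ≤ a * log (a / b) := by gcongr

theorem Dkl_nonneg {q p : X → ℝ} (hq : IsProb q) (hp : IsProb p)
    (hqp : ∀ x, p x = 0 → q x = 0) : 0 ≤ Dkl q p := by
  calc (0 : ℝ) = ∑ x, (q x - p x) / log 2 := by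
        rw [← sum_div, sum_sub_distrib, hq.2, hp.2, sub_self, zero_div]
    _ ≤ Dkl q p :=
        sum_le_sum fun x _ => sub_div_log_two_le_mul_logb_div (hq.1 x) (hp.1 x)
          fun hq hp => hq (hqp x hp)

end Divergence

section Escort

variable {X : Type*} {p : X → ℝ}

/-- Restricted to the support of `p`, since `0 ^ 0 = 1` for `Real.rpow`. -/
noncomputable def escortWeight (p : X → ℝ) (α : ℝ) (x : X) : ℝ :=
  if p x = 0 then 0 else p x ^ α

theorem escortWeight_pos {x : X} (hx : 0 < p x) (α : ℝ) : 0 < escortWeight p α x := by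
  rw [escortWeight, if_neg hx.ne']
  exact rpow_pos_of_pos hx α

theorem escortWeight_nonneg {x : X} (hx : 0 ≤ p x) (α : ℝ) : 0 ≤ escortWeight p α x := by
  rcases hx.eq_or_lt with hx | hx
  · simp [escortWeight, ← hx]
  · exact (escortWeight_pos hx α).le

variable [Fintype X]

noncomputable def escortPartition (p : X → ℝ) (α : ℝ) : ℝ :=
  ∑ x, escortWeight p α x

noncomputable def escort (p : X → ℝ) (α : ℝ) (x : X) : ℝ :=
  escortWeight p α x / escortPartition p α

theorem escortPartition_pos (hp : IsProb p) (α : ℝ) : 0 < escortPartition p α := by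
  obtain ⟨x, hx⟩ : ∃ x, p x ≠ 0 := by
    by_contra! h
    simpa [h] using hp.2
  exact sum_pos' (fun y _ => escortWeight_nonneg (hp.1 y) α)
    ⟨x, mem_univ x, escortWeight_pos ((hp.1 x).lt_of_ne' hx) α⟩

theorem escortPartition_one (hp : IsProb p) : escortPartition p 1 = 1 := by
  calc escortPartition p 1 = ∑ x, p x :=
        sum_congr rfl fun x _ => by by_cases hx : p x = 0 <;> simp [escortWeight, hx]
    _ = 1 := hp.2

theorem isProb_escort (hp : IsProb p) (α : ℝ) : IsProb (escort p α) :=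
  ⟨fun x => div_nonneg (escortWeight_nonneg (hp.1 x) α) (escortPartition_pos hp α).le,
    by simp only [escort, ← sum_div]; exact div_self (escortPartition_pos hp α).ne'⟩

theorem escort_eq_zero_iff (hp : IsProb p) (α : ℝ) (x : X) : escort p α x = 0 ↔ p x = 0 := by
  refine ⟨fun h => ?_, fun h => by simp [escort, escortWeight, h]⟩
  by_contra hx
  exact (div_pos (escortWeight_pos ((hp.1 x).lt_of_ne' hx) α) (escortPartition_pos hp α)).ne' h

theorem logb_escort (hp : IsProb p) (α : ℝ) {x : X} (hx : p x ≠ 0) :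
    logb 2 (escort p α x) = α * logb 2 (p x) - logb 2 (escortPartition p α) := by
  have hx : 0 < p x := (hp.1 x).lt_of_ne' hx
  rw [escort, logb_div (escortWeight_pos hx α).ne' (escortPartition_pos hp α).ne',
    escortWeight, if_neg hx.ne', logb_rpow_eq_mul_logb_of_pos hx]

theorem crossEntropy_escort {q : X → ℝ} (hp : IsProb p) (hq : ∑ x, q x = 1)
    (hqp : ∀ x, p x = 0 → q x = 0) (α : ℝ) :
    crossEntropy q (escort p α) = α * crossEntropy q p + logb 2 (escortPartition p α) := by
  have hterm : ∀ x, q x * logb 2 (escort p α x)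
      = α * (q x * logb 2 (p x)) - logb 2 (escortPartition p α) * q x := by
    intro x
    by_cases hx : p x = 0
    · simp [hqp x hx]
    · rw [logb_escort hp α hx]
      ring
  simp only [crossEntropy, hterm, sum_sub_distrib, ← mul_sum, hq]
  ring

theorem continuous_escort (hp : IsProb p) (x : X) : Continuous fun α => escort p α x := by
  have hweight : ∀ y, Continuous fun α => escortWeight p α y := by
    intro y
    by_cases hy : p y = 0
    · simp only [escortWeight, hy, if_true]
      exact continuous_const
    · simp only [escortWeight, hy, if_false]
      exact continuous_const.rpow continuous_id fun _ => Or.inl hy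
  exact (hweight x).div (continuous_finsetSum _ fun y _ => hweight y)
    fun α => (escortPartition_pos hp α).ne'

theorem continuous_crossEntropy_escort (hp : IsProb p) :
    Continuous fun α => crossEntropy (escort p α) p :=
  (continuous_finsetSum _ fun x _ => (continuous_escort hp x).mul continuous_const).neg

theorem one_sub_mul_renyiEntropy (hp : IsProb p) (α : ℝ) :
    (1 - α) * renyiEntropy α p = logb 2 (escortPartition p α) := by
  rw [renyiEntropy]
  split_ifs with hα
  · rw [hα, escortPartition_one hp, sub_self, zero_mul, logb_one]
  · rw [← mul_assoc, mul_one_div_cancel (sub_ne_zero.mpr (Ne.symm hα)), one_mul]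
    rfl

end Escort

theorem csSup_eq_csInf_of_forall_le_of_exists_le {α : Type*} [ConditionallyCompleteLattice α]
    {A B : Set α} (hle : ∀ a ∈ A, ∀ b ∈ B, a ≤ b) (hex : ∃ a ∈ A, ∃ b ∈ B, b ≤ a) :
    sSup A = sInf B := by
  obtain ⟨a, ha, b, hb, hba⟩ := hex
  have hab : a = b := (hle a ha b hb).antisymm hba
  subst hab
  rw [IsGreatest.csSup_eq ⟨ha, fun c hc => hle c hc a hb⟩,
    IsLeast.csInf_eq ⟨hb, fun c hc => hle a ha c hc⟩]

theorem exists_mem_Icc_one_sub_mul_sub_add_max_nonpos {f : ℝ → ℝ}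
    (hf : ContinuousOn f (Icc 0 1)) (r : ℝ) :
    ∃ β ∈ Icc (0 : ℝ) 1, (1 - β) * (f β - r) + max 0 (r - f β) ≤ 0 := by
  by_cases h1 : r ≤ f 1
  · exact ⟨1, right_mem_Icc.mpr zero_le_one, by simp [h1]⟩
  by_cases h0 : f 0 ≤ r
  · refine ⟨0, left_mem_Icc.mpr zero_le_one, ?_⟩
    rw [max_eq_right (sub_nonneg.mpr h0)]
    linarith
  rw [not_le] at h0 h1
  obtain ⟨β, hβ, hfβ⟩ := intermediate_value_Icc' zero_le_one hf ⟨h1.le, h0.le⟩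
  exact ⟨β, hβ, by simp [hfβ]⟩

section Duality

variable {X : Type*} [Fintype X] {p q : X → ℝ}

theorem one_sub_mul_sub_renyiEntropy_le (hp : IsProb p) (hq : IsProb q)
    (hqp : ∀ x, p x = 0 → q x = 0) (r : ℝ) {α : ℝ} (hα : α ∈ Icc (0 : ℝ) 1) :
    (1 - α) * (r - renyiEntropy α p)
      ≤ Dkl q p + max 0 (r - shannonEntropy q - Dkl q p) := by
  have hqe : ∀ x, escort p α x = 0 → q x = 0 :=
    fun x hx => hqp x ((escort_eq_zero_iff hp α x).mp hx)
  have hgibbs := Dkl_nonneg hq (isProb_escort hp α) hqe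
  rw [Dkl_eq_crossEntropy_sub_shannonEntropy hqe, crossEntropy_escort hp hq.2 hqp] at hgibbs
  have hD := Dkl_eq_crossEntropy_sub_shannonEntropy hqp
  have hmax : (1 - α) * (r - shannonEntropy q - Dkl q p)
      ≤ max 0 (r - shannonEntropy q - Dkl q p) :=
    (mul_le_mul_of_nonneg_left (le_max_right _ _) (sub_nonneg.mpr hα.2)).trans
      (mul_le_of_le_one_left (le_max_left _ _) (sub_le_self 1 hα.1))
  rw [mul_sub, one_sub_mul_renyiEntropy hp]
  linear_combination hgibbs + hmax - α * hD

theorem Dkl_escort_add_max (hp : IsProb p) (β r : ℝ) :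
    Dkl (escort p β) p + max 0 (r - shannonEntropy (escort p β) - Dkl (escort p β) p)
      = (1 - β) * (r - renyiEntropy β p)
        + ((1 - β) * (crossEntropy (escort p β) p - r)
          + max 0 (r - crossEntropy (escort p β) p)) := by
  have hqp : ∀ x, p x = 0 → escort p β x = 0 := fun x => (escort_eq_zero_iff hp β x).mpr
  have hD := Dkl_eq_crossEntropy_sub_shannonEntropy hqp
  have hself := Dkl_eq_crossEntropy_sub_shannonEntropy (q := escort p β) fun _ => id
  rw [Dkl_self, crossEntropy_escort hp (isProb_escort hp β).2 hqp] at hself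
  have hcross : r - shannonEntropy (escort p β) - Dkl (escort p β) p
      = r - crossEntropy (escort p β) p := by
    linarith
  rw [hcross, mul_sub, one_sub_mul_renyiEntropy hp]
  linarith

end Duality

theorem renyi_legendre_identity_general {X : Type*} [Fintype X] (p : X → ℝ) (hp : IsProb p)
    (r : ℝ) :
    sSup {v | ∃ α ∈ Set.Icc (0:ℝ) 1, v = (1 - α) * (r - renyiEntropy α p)} =
      sInf {v | ∃ q : X → ℝ, IsProb q ∧ (∀ x, p x = 0 → q x = 0) ∧
        v = Dkl q p + max 0 (r - shannonEntropy q - Dkl q p)} := by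
  refine csSup_eq_csInf_of_forall_le_of_exists_le ?_ ?_
  · rintro _ ⟨α, hα, rfl⟩ _ ⟨q, hq, hqp, rfl⟩
    exact one_sub_mul_sub_renyiEntropy_le hp hq hqp r hα
  · obtain ⟨β, hβ, hgap⟩ := exists_mem_Icc_one_sub_mul_sub_add_max_nonpos
      (continuous_crossEntropy_escort hp).continuousOn r
    refine ⟨_, ⟨β, hβ, rfl⟩, _, ⟨escort p β, isProb_escort hp β,
      fun x => (escort_eq_zero_iff hp β x).mpr, rfl⟩, ?_⟩
    rw [Dkl_escort_add_max hp]
    linarith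

/-- `sup_{0≤α≤1} (1-α)(r - H_α(p)) = inf_q [ D(q‖p) + max{0, r - H(q) - D(q‖p)} ]`. -/
theorem renyi_legendre_identity {X : Type*} [Fintype X] (p : X → ℝ) (hp : IsProb p)
    (r : ℝ) (hr : 0 ≤ r) :
    sSup {v | ∃ α ∈ Set.Icc (0:ℝ) 1, v = (1 - α) * (r - renyiEntropy α p)} =
      sInf {v | ∃ q : X → ℝ, IsProb q ∧ (∀ x, p x = 0 → q x = 0) ∧
        v = Dkl q p + max 0 (r - shannonEntropy q - Dkl q p)} :=
  renyi_legendre_identity_general p hp r
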